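/- For g(x) = 1 − e^{−x} and any fixed x > 0, the limit α(x) = lim_{n→∞} ( −(1/3)log n + 2/g^{[n]}(x) − n ) exists (in ℝ). -/

import Mathlib

/-!
Put `a n = g^[n] x` and `b n = 2 / a n`. Since `0 < g y < y` for `y > 0`, the iterates decrease
to the fixed point `0`. For small `y` the expansion `1 - e^{-y} = y - y²/2 + y³/6 + O(y⁴)` gives
`2 / g y = 2 / y + 1 + y / 6 + O(y²)`, i.e. `b (n+1) = b n + 1 + 1 / (3 b n) + O(b n⁻²)`.
Hence `b n = n + O(log n)`, and the increments of `b n - n - (log n) / 3` are `O(log n / n²)`,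
which is summable.
-/

open Filter Topology Real

lemma abs_one_sub_exp_neg_sub_le {y : ℝ} (h0 : 0 ≤ y) (h1 : y ≤ 1) :
    |(1 - exp (-y)) - (y - y ^ 2 / 2 + y ^ 3 / 6)| ≤ y ^ 4 := by
  have h := Real.exp_bound (x := -y) (by rwa [abs_neg, abs_of_nonneg h0]) (n := 4) (by norm_num)
  norm_num [Finset.sum_range_succ, Nat.factorial, abs_of_nonneg h0] at h
  calc |(1 - exp (-y)) - (y - y ^ 2 / 2 + y ^ 3 / 6)|
      = |exp (-y) - (1 + -y + y ^ 2 / 2 + (-y) ^ 3 / 6)| := by rw [abs_sub_comm]; ring_nf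
    _ ≤ y ^ 4 * (5 / 96) := h
    _ ≤ y ^ 4 := by nlinarith [pow_nonneg h0 4]

lemma abs_two_div_one_sub_exp_neg_sub_le {y : ℝ} (h0 : 0 < y) (h1 : y ≤ 1 / 100) :
    |2 / (1 - exp (-y)) - 2 / y - 1 - y / 6| ≤ 5 * y ^ 2 := by
  set G := 1 - exp (-y)
  have hG := abs_le.mp (abs_one_sub_exp_neg_sub_le h0.le (by linarith))
  have hGlo : y / 2 ≤ G := by nlinarith [pow_pos h0 2, pow_pos h0 3, pow_pos h0 4]
  have hG0 : 0 < G := by linarith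
  have hnum : |12 * y - (12 + 6 * y + y ^ 2) * G| ≤ 14 * y ^ 4 := by
    rw [abs_le]
    constructor <;> nlinarith [pow_pos h0 2, pow_pos h0 3, pow_pos h0 4, pow_pos h0 5]
  calc |2 / G - 2 / y - 1 - y / 6|
      = |12 * y - (12 + 6 * y + y ^ 2) * G| / (6 * y * G) := by
        rw [← abs_of_pos (by positivity : 0 < 6 * y * G), ← abs_div]
        congr 1
        field_simp
        ring
    _ ≤ 14 * y ^ 4 / (3 * y ^ 2) := div_le_div₀ (by positivity) hnum (by positivity) (by nlinarith)
    _ ≤ 5 * y ^ 2 := by rw [div_le_iff₀ (by positivity)]; nlinarith [pow_pos h0 4]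

lemma abs_two_div_one_sub_exp_neg_two_div_sub_le {b : ℝ} (hb : 200 ≤ b) :
    |2 / (1 - exp (-(2 / b))) - b - 1 - 1 / (3 * b)| ≤ 20 / b ^ 2 := by
  have hb0 : 0 < b := by linarith
  have h := abs_two_div_one_sub_exp_neg_sub_le (y := 2 / b) (by positivity)
    (by rw [div_le_iff₀ hb0]; linarith)
  rw [div_div_cancel₀ two_ne_zero, div_div, show 2 / (b * 6) = 1 / (3 * b) by field_simp; ring]
    at h
  exact h.trans_eq (by ring)

lemma abs_inv_sub_log_add_one_sub_log_le {x : ℝ} (hx : 0 < x) :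
    |x⁻¹ - (log (x + 1) - log x)| ≤ (x ^ 2)⁻¹ := by
  have hlo : (x + 1)⁻¹ ≤ log (x + 1) - log x := by
    have h := one_sub_inv_le_log_of_pos (x := (x + 1) / x) (by positivity)
    rw [log_div (by positivity) hx.ne', inv_div] at h
    calc (x + 1)⁻¹ = 1 - x / (x + 1) := by field_simp; ring
      _ ≤ _ := h
  have hhi : log (x + 1) - log x ≤ x⁻¹ := by
    have h := log_le_sub_one_of_pos (x := (x + 1) / x) (by positivity)
    rw [log_div (by positivity) hx.ne'] at h
    calc _ ≤ (x + 1) / x - 1 := h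
      _ = x⁻¹ := by field_simp; ring
  have hgap : x⁻¹ - (x + 1)⁻¹ ≤ (x ^ 2)⁻¹ := by
    rw [inv_sub_inv hx.ne' (by positivity : x + 1 ≠ 0), add_sub_cancel_left, one_div]
    gcongr
    nlinarith
  rw [abs_le]
  constructor <;> linarith [inv_nonneg.mpr (sq_nonneg x)]

lemma summable_one_add_log_div_sq : Summable fun n : ℕ => (1 + log n) / (n : ℝ) ^ 2 := by
  refine ((summable_nat_rpow_inv.mpr (by norm_num : (1 : ℝ) < 3 / 2)).mul_left 3).of_nonneg_of_le
    (fun n => by positivity) (fun n => ?_)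
  rcases Nat.eq_zero_or_pos n with rfl | hn
  · simp
  have hx : (1 : ℝ) ≤ n := by exact_mod_cast hn
  set s := (n : ℝ) ^ (1 / 2 : ℝ)
  have hs : s * s = n := by rw [← rpow_add (by positivity)]; norm_num
  have hs1 : 1 ≤ s := one_le_rpow hx (by norm_num)
  have hpow : (n : ℝ) ^ (3 / 2 : ℝ) = n * s := by
    rw [show (3 / 2 : ℝ) = 1 + 1 / 2 by norm_num, rpow_add (by positivity), rpow_one]
  have hlog : log n ≤ 2 * s :=
    calc log n ≤ s / (1 / 2) := log_le_rpow_div (by positivity) (by norm_num)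
      _ = 2 * s := by ring
  rw [hpow, ← div_eq_mul_inv, div_le_div_iff₀ (by positivity) (by positivity)]
  have hsn : s ≤ n := by nlinarith
  nlinarith [mul_le_mul_of_nonneg_left hlog (by positivity : (0 : ℝ) ≤ n * s),
    mul_le_mul_of_nonneg_left hsn (by positivity : (0 : ℝ) ≤ n)]

section Orbit

variable {b c y : ℝ}

lemma div_sq_le_one_div_three_mul (hb : 0 < b) (hc : 3 * c ≤ b) : c / b ^ 2 ≤ 1 / (3 * b) :=
  calc c / b ^ 2 ≤ (b / 3) / b ^ 2 := by gcongr; linarith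
    _ = 1 / (3 * b) := by field_simp

lemma add_one_le_of_abs_sub_le (hb : 0 < b) (hc : 3 * c ≤ b)
    (h : |y - b - 1 - 1 / (3 * b)| ≤ c / b ^ 2) : b + 1 ≤ y := by
  linarith [(abs_le.mp h).1, div_sq_le_one_div_three_mul hb hc]

lemma le_add_one_add_inv_of_abs_sub_le (hb : 0 < b) (hc : 3 * c ≤ b)
    (h : |y - b - 1 - 1 / (3 * b)| ≤ c / b ^ 2) : y ≤ b + 1 + b⁻¹ := by
  have : 1 / (3 * b) = b⁻¹ / 3 := by field_simp
  linarith [(abs_le.mp h).2, div_sq_le_one_div_three_mul hb hc, inv_pos.mpr hb]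

variable {φ : ℝ → ℝ} {B C : ℝ}

lemma add_le_iterate (hB : 0 < B) (hBC : 3 * C ≤ B)
    (hφ : ∀ b, B ≤ b → |φ b - b - 1 - 1 / (3 * b)| ≤ C / b ^ 2) (hb : B ≤ b) (n : ℕ) :
    b + n ≤ φ^[n] b := by
  induction n with
  | zero => simp
  | succ n ih =>
    have hBn : B ≤ φ^[n] b := by linarith [n.cast_nonneg (α := ℝ)]
    have := add_one_le_of_abs_sub_le (by linarith) (by linarith) (hφ _ hBn)
    rw [Function.iterate_succ_apply']
    push_cast
    linarith

lemma iterate_le_add_harmonic (hB : 1 ≤ B) (hBC : 3 * C ≤ B)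
    (hφ : ∀ b, B ≤ b → |φ b - b - 1 - 1 / (3 * b)| ≤ C / b ^ 2) (hb : B ≤ b) (n : ℕ) :
    φ^[n] b ≤ b + n + harmonic n := by
  induction n with
  | zero => simp
  | succ n ih =>
    have hlo := add_le_iterate (by linarith) hBC hφ hb n
    have hBn : B ≤ φ^[n] b := by linarith [n.cast_nonneg (α := ℝ)]
    have hstep := le_add_one_add_inv_of_abs_sub_le (by linarith) (by linarith) (hφ _ hBn)
    have hinv : (φ^[n] b)⁻¹ ≤ ((n + 1 : ℕ) : ℝ)⁻¹ := by
      push_cast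
      gcongr
      linarith
    rw [Function.iterate_succ_apply', harmonic_succ]
    push_cast at hinv ⊢
    linarith

lemma abs_iterate_succ_sub_le (hB : 1 ≤ B) (hBC : 3 * C ≤ B)
    (hφ : ∀ b, B ≤ b → |φ b - b - 1 - 1 / (3 * b)| ≤ C / b ^ 2) (hb : B ≤ b) {n : ℕ}
    (hn : 0 < n) :
    |(φ^[n + 1] b - (n + 1 : ℕ) - log (n + 1 : ℕ) / 3) - (φ^[n] b - n - log n / 3)| ≤
      (C + b + 1) * ((1 + log n) / (n : ℝ) ^ 2) := by
  set β := φ^[n] b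
  have hn1 : (1 : ℝ) ≤ n := by exact_mod_cast hn
  have hlog : 0 ≤ log n := log_nonneg hn1
  have hβlo : b + n ≤ β := add_le_iterate (by linarith) hBC hφ hb n
  have hβ0 : 0 < β := by linarith
  have hβhi : β ≤ b + n + 1 + log n := by
    linarith [iterate_le_add_harmonic hB hBC hφ hb n, harmonic_le_one_add_log n]
  have hstep := hφ β (by linarith)
  have hC : 0 ≤ C := by
    by_contra! hC
    have := div_neg_of_neg_of_pos hC (by positivity : 0 < β ^ 2)
    linarith [abs_nonneg (φ β - β - 1 - 1 / (3 * β))]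
  have h₁ : C / β ^ 2 ≤ C / (n : ℝ) ^ 2 := by gcongr; linarith
  have h₂ : |1 / (3 * β) - 1 / (3 * n)| ≤ (b + 1 + log n) / (3 * (n : ℝ) ^ 2) := by
    rw [abs_sub_comm, show 1 / (3 * n) - 1 / (3 * β) = (β - n) / (3 * n * β) by field_simp,
      abs_of_nonneg (by apply div_nonneg <;> [linarith; positivity])]
    exact div_le_div₀ (by linarith) (by linarith) (by positivity) (by nlinarith)
  have h₃ := abs_inv_sub_log_add_one_sub_log_le (by positivity : (0 : ℝ) < n)
  rw [Function.iterate_succ_apply']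
  calc |(φ β - (n + 1 : ℕ) - log (n + 1 : ℕ) / 3) - (β - n - log n / 3)|
      = |(φ β - β - 1 - 1 / (3 * β)) + (1 / (3 * β) - 1 / (3 * n)) +
          ((n : ℝ)⁻¹ - (log (n + 1) - log n)) / 3| := by
        push_cast
        congr 1
        ring
    _ ≤ |φ β - β - 1 - 1 / (3 * β)| + |1 / (3 * β) - 1 / (3 * n)| +
          |(n : ℝ)⁻¹ - (log (n + 1) - log n)| / 3 := by
        refine (abs_add_three _ _ _).trans_eq ?_
        rw [abs_div, abs_of_pos (by norm_num : (0 : ℝ) < 3)]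
    _ ≤ C / (n : ℝ) ^ 2 + (b + 1 + log n) / (3 * (n : ℝ) ^ 2) + ((n : ℝ) ^ 2)⁻¹ / 3 := by
        gcongr
        exact hstep.trans h₁
    _ = (C + (b + 2 + log n) / 3) * ((n : ℝ) ^ 2)⁻¹ := by ring
    _ ≤ (C + b + 1) * (1 + log n) * ((n : ℝ) ^ 2)⁻¹ := by
        gcongr
        nlinarith [mul_nonneg hC hlog, mul_nonneg (by linarith : 0 ≤ b) hlog]
    _ = (C + b + 1) * ((1 + log n) / (n : ℝ) ^ 2) := by ring

lemma exists_tendsto_iterate_sub (hB : 1 ≤ B) (hBC : 3 * C ≤ B)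
    (hφ : ∀ b, B ≤ b → |φ b - b - 1 - 1 / (3 * b)| ≤ C / b ^ 2) (hb : B ≤ b) :
    ∃ L, Tendsto (fun n : ℕ => φ^[n] b - n - log n / 3) atTop (𝓝 L) := by
  have hsum : Summable fun n : ℕ =>
      dist (φ^[n] b - n - log n / 3) (φ^[n + 1] b - (n + 1 : ℕ) - log (n + 1 : ℕ) / 3) := by
    refine (summable_one_add_log_div_sq.mul_left (C + b + 1)).of_norm_bounded_eventually_nat ?_
    filter_upwards [eventually_gt_atTop 0] with n hn
    rw [Real.norm_of_nonneg dist_nonneg, dist_comm, Real.dist_eq]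
    exact abs_iterate_succ_sub_le hB hBC hφ hb hn
  exact cauchySeq_tendsto_of_complete (cauchySeq_of_summable_dist hsum)

lemma exists_tendsto_iterate_sub_of_le_iterate (hB : 1 ≤ B) (hBC : 3 * C ≤ B)
    (hφ : ∀ b, B ≤ b → |φ b - b - 1 - 1 / (3 * b)| ≤ C / b ^ 2) {N : ℕ} (hN : B ≤ φ^[N] b) :
    ∃ L, Tendsto (fun n : ℕ => φ^[n] b - n - log n / 3) atTop (𝓝 L) := by
  obtain ⟨L, hL⟩ := exists_tendsto_iterate_sub hB hBC hφ hN
  have hlog : Tendsto (fun n : ℕ => log (n + N) - log n) atTop (𝓝 0) :=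
    (tendsto_log_comp_add_sub_log N).comp tendsto_natCast_atTop_atTop
  refine ⟨L - N - 0 / 3, (tendsto_add_atTop_iff_nat N).mp ?_⟩
  refine ((hL.sub_const (N : ℝ)).sub (hlog.div_const 3)).congr fun n => ?_
  rw [Function.iterate_add_apply]
  push_cast
  ring

end Orbit

lemma tendsto_iterate_nhdsGT_zero {f : ℝ → ℝ} (hf : Continuous f)
    (hpos : Set.MapsTo f (Set.Ioi 0) (Set.Ioi 0)) (hlt : ∀ y, 0 < y → f y < y) {x : ℝ}
    (hx : 0 < x) : Tendsto (fun n => f^[n] x) atTop (𝓝[>] 0) := by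
  have hpos' : ∀ n, 0 < f^[n] x := fun n => hpos.iterate n hx
  have hanti : Antitone fun n => f^[n] x := antitone_nat_of_succ_le fun n => by
    rw [Function.iterate_succ_apply']
    exact (hlt _ (hpos' n)).le
  have hlim := tendsto_atTop_ciInf hanti ⟨0, by rintro _ ⟨n, rfl⟩; exact (hpos' n).le⟩
  have hzero : ⨅ n, f^[n] x = 0 := by
    refine (le_ciInf fun n => (hpos' n).le).antisymm' ?_
    by_contra! h
    exact (hlt _ h).ne (isFixedPt_of_tendsto_iterate hlim hf.continuousAt)
  rw [hzero] at hlim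
  exact tendsto_nhdsWithin_iff.mpr ⟨hlim, Eventually.of_forall hpos'⟩

/-- Fatou/Walker's limit: for `g x = 1 - exp (-x)` and any `x > 0`, the limit
`α(x) = lim_{n→∞} ( -(1/3) log n + 2 / g^[n](x) - n )` exists in `ℝ`. -/
theorem fatou_walker_limit_exists :
    ∀ x : ℝ, 0 < x → ∃ L : ℝ,
      Tendsto (fun n : ℕ =>
          -(1/3) * Real.log n + 2 / (fun y : ℝ => 1 - Real.exp (-y))^[n] x - n) atTop
        (𝓝 L) := by
  intro x hx
  set g : ℝ → ℝ := fun y => 1 - exp (-y)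
  have hconj : Function.Semiconj (2 / ·) g (fun b => 2 / g (2 / b)) := fun y => by
    simp only [div_div_cancel₀ (two_ne_zero (α := ℝ))]
  have hg_pos : Set.MapsTo g (Set.Ioi 0) (Set.Ioi 0) := fun y hy =>
    sub_pos.mpr (exp_lt_one_iff.mpr (neg_neg_of_pos hy))
  have hg_lt : ∀ y, 0 < y → g y < y := fun y hy => by
    linarith [add_one_lt_exp (neg_ne_zero.mpr hy.ne')]
  obtain ⟨N, hN⟩ := ((tendsto_iterate_nhdsGT_zero (by fun_prop) hg_pos hg_lt hx).eventually
    (Ioc_mem_nhdsGT (by norm_num : (0 : ℝ) < 1 / 100))).exists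
  have h200 : 200 ≤ (fun b => 2 / g (2 / b))^[N] (2 / x) := by
    rw [← hconj.iterate_right N x, le_div_iff₀ hN.1]
    linarith [hN.2]
  obtain ⟨L, hL⟩ := exists_tendsto_iterate_sub_of_le_iterate (by norm_num) (by norm_num)
    (fun _ => abs_two_div_one_sub_exp_neg_two_div_sub_le) h200
  refine ⟨L, hL.congr fun n => ?_⟩
  rw [← hconj.iterate_right n x]
  ring
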